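/- arXiv:1706.06214 — 8 statements merged into one kernel-verified Lean document; each statement's English description precedes it below -/
import Mathlib

section
/- Let y1, y2 be distinct points in R^d and let Y be a finite set of points such that conv(Y) ∩ conv({y1,y2}) ≠ ∅ (Y is an obstacle between y1 and y2). If Y is nontrivial (y1 ∉ conv(Y) and y2 ∉ conv(Y)) and the segment conv({y1,y2}) is contained in the affine hull aff(Y), then Y is not minimal: there exists y ∈ Y with conv(Y \ {y}) ∩ conv({y1,y2}) ≠ ∅. -/
/-!
Walk along the segment from `y1` to `y2` up to the first point `x` of `conv Y`; it exists since
`conv Y` is closed, and `x ≠ y1`. If `Y` were minimal, `x` would have strictly positive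
barycentric weights on `Y`. As `y1 - y2` lies in the direction of `aff Y`, it is a combination of
`Y` with coefficient sum zero, so adding a small multiple of it keeps the weights positive: points
of the segment slightly before `x` still lie in `conv Y`, a contradiction.
-/

open Filter Set AffineMap Topology

variable {k E : Type*} [AddCommGroup E]

theorem Finset.exists_sum_eq_zero_of_mem_vectorSpan [Ring k] [Module k E] {Y : Finset E} {v : E}
    (hv : v ∈ vectorSpan k (Y : Set E)) :
    ∃ c : E → k, ∑ y ∈ Y, c y = 0 ∧ ∑ y ∈ Y, c y • y = v := by
  classical
  rw [vectorSpan_def] at hv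
  induction hv using Submodule.span_induction with
  | mem v hv =>
    obtain ⟨a, ha : a ∈ Y, b, hb : b ∈ Y, rfl⟩ := hv
    refine ⟨fun y => (if y = a then 1 else 0) - (if y = b then 1 else 0), ?_, ?_⟩
    · simp [sum_sub_distrib, ha, hb]
    · simp [sub_smul, sum_sub_distrib, ite_smul, ha, hb]
  | zero => exact ⟨0, by simp, by simp⟩
  | add v w _ _ hv hw =>
    obtain ⟨c, hc, rfl⟩ := hv
    obtain ⟨c', hc', rfl⟩ := hw
    exact ⟨c + c', by simp [sum_add_distrib, hc, hc'], by
      simp [add_smul, sum_add_distrib]⟩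
  | smul r v _ hv =>
    obtain ⟨c, hc, rfl⟩ := hv
    exact ⟨r • c, by simp [← mul_sum, hc], by simp [smul_sum, mul_smul]⟩

theorem Finset.exists_pos_weights_of_forall_notMem_convexHull_erase [Field k] [LinearOrder k]
    [IsStrictOrderedRing k] [Module k E] [DecidableEq E] {Y : Finset E} {x : E}
    (hx : x ∈ convexHull k (Y : Set E))
    (hmin : ∀ y ∈ Y, x ∉ convexHull k (Y.erase y : Set E)) :
    ∃ w : E → k, (∀ y ∈ Y, 0 < w y) ∧ ∑ y ∈ Y, w y = 1 ∧ ∑ y ∈ Y, w y • y = x := by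
  obtain ⟨w, hw₀, hw₁, hwx⟩ := mem_convexHull'.mp hx
  refine ⟨w, fun y hy => (hw₀ y hy).lt_of_ne fun hy₀ => hmin y hy ?_, hw₁, hwx⟩
  refine mem_convexHull'.mpr ⟨w, fun z hz => hw₀ z (mem_of_mem_erase hz), ?_, ?_⟩
  · rwa [sum_erase _ hy₀.symm]
  · rwa [sum_erase _ (by simp [← hy₀])]

variable [Module ℝ E]

theorem Finset.eventually_add_smul_mem_convexHull [DecidableEq E] {Y : Finset E} {x v : E}
    (hx : x ∈ convexHull ℝ (Y : Set E))
    (hmin : ∀ y ∈ Y, x ∉ convexHull ℝ (Y.erase y : Set E))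
    (hv : v ∈ vectorSpan ℝ (Y : Set E)) :
    ∀ᶠ ε in 𝓝 (0 : ℝ), x + ε • v ∈ convexHull ℝ (Y : Set E) := by
  obtain ⟨w, hw₀, hw₁, rfl⟩ := exists_pos_weights_of_forall_notMem_convexHull_erase hx hmin
  obtain ⟨c, hc₀, rfl⟩ := exists_sum_eq_zero_of_mem_vectorSpan hv
  have hpos : ∀ᶠ ε in 𝓝 (0 : ℝ), ∀ y ∈ Y, 0 < w y + ε * c y :=
    (Filter.eventually_all_finset Y).mpr fun y hy =>
      ((continuous_const.add (continuous_id.mul continuous_const)).tendsto' _ _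
        (by simp)).eventually_const_lt (hw₀ y hy)
  filter_upwards [hpos] with ε hε
  refine mem_convexHull'.mpr ⟨fun y => w y + ε * c y, fun y hy => (hε y hy).le, ?_, ?_⟩
  · simp [sum_add_distrib, ← mul_sum, hw₁, hc₀]
  · simp [add_smul, mul_smul, sum_add_distrib, smul_sum]

theorem exists_isLeast_lineMap_mem [TopologicalSpace E] [IsTopologicalAddGroup E]
    [ContinuousSMul ℝ E] {C : Set E} (hC : IsClosed C) {x z : E}
    (h : (C ∩ segment ℝ x z).Nonempty) :
    ∃ t, IsLeast {t ∈ Icc (0 : ℝ) 1 | lineMap x z t ∈ C} t := by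
  refine (isCompact_Icc.inter_right (hC.preimage lineMap_continuous)).exists_isLeast ?_
  obtain ⟨_, hpC, t, ht, rfl⟩ := segment_eq_image_lineMap (𝕜 := ℝ) x z ▸ h
  exact ⟨t, ht, hpC⟩

theorem stmt_5_general (d : ℕ) (y1 y2 : Fin d → ℝ) (Y : Finset (Fin d → ℝ))
    (hobs : (convexHull ℝ (Y : Set (Fin d → ℝ)) ∩ convexHull ℝ ({y1, y2} : Set (Fin d → ℝ))).Nonempty)
    (h1 : y1 ∉ convexHull ℝ (Y : Set (Fin d → ℝ)))
    (haff : convexHull ℝ ({y1, y2} : Set (Fin d → ℝ)) ⊆ (affineSpan ℝ (Y : Set (Fin d → ℝ)) : Set (Fin d → ℝ))) :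
    ∃ y ∈ Y,
      (convexHull ℝ ((Y.erase y : Finset (Fin d → ℝ)) : Set (Fin d → ℝ)) ∩
        convexHull ℝ ({y1, y2} : Set (Fin d → ℝ))).Nonempty := by
  by_contra! hmin
  rw [convexHull_pair] at hobs haff hmin
  obtain ⟨t, ⟨ht, htY⟩, hleast⟩ :=
    exists_isLeast_lineMap_mem (Y.finite_toSet.isClosed_convexHull (𝕜 := ℝ)) hobs
  have ht₀ : 0 < t := ht.1.lt_of_ne <| by rintro rfl; exact h1 (by simpa using htY)
  have hv : y1 - y2 ∈ vectorSpan ℝ (Y : Set (Fin d → ℝ)) := by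
    rw [← direction_affineSpan]
    exact AffineSubspace.vsub_mem_direction (haff (left_mem_segment ℝ y1 y2))
      (haff (right_mem_segment ℝ y1 y2))
  have hx : ∀ y ∈ Y, lineMap y1 y2 t ∉ convexHull ℝ (Y.erase y : Set (Fin d → ℝ)) :=
    fun y hy hxy =>
      (hmin y hy).subset ⟨hxy, segment_eq_image_lineMap (𝕜 := ℝ) y1 y2 ▸ ⟨t, ht, rfl⟩⟩
  obtain ⟨ε, hmem, hε₀, hεt⟩ :=
    (((Y.eventually_add_smul_mem_convexHull htY hx hv).filter_mono nhdsWithin_le_nhds).and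
      (Ioo_mem_nhdsGT ht₀)).exists
  have hback : lineMap y1 y2 (t - ε) = lineMap y1 y2 t + ε • (y1 - y2) := by
    simp only [lineMap_apply_module]
    module
  linarith [hleast ⟨⟨by linarith, by linarith [ht.2]⟩, hback ▸ hmem⟩]

/-- A nontrivial obstacle whose affine hull contains the whole segment is not
minimal. -/
theorem stmt_5 (d : ℕ) (y1 y2 : Fin d → ℝ) (hne : y1 ≠ y2) (Y : Finset (Fin d → ℝ))
    (hobs : (convexHull ℝ (Y : Set (Fin d → ℝ)) ∩ convexHull ℝ ({y1, y2} : Set (Fin d → ℝ))).Nonempty)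
    (h1 : y1 ∉ convexHull ℝ (Y : Set (Fin d → ℝ)))
    (h2 : y2 ∉ convexHull ℝ (Y : Set (Fin d → ℝ)))
    (haff : convexHull ℝ ({y1, y2} : Set (Fin d → ℝ)) ⊆ (affineSpan ℝ (Y : Set (Fin d → ℝ)) : Set (Fin d → ℝ))) :
    ∃ y ∈ Y,
      (convexHull ℝ ((Y.erase y : Finset (Fin d → ℝ)) : Set (Fin d → ℝ)) ∩
        convexHull ℝ ({y1, y2} : Set (Fin d → ℝ))).Nonempty :=
  stmt_5_general d y1 y2 Y hobs h1 haff
end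

section
/- Let Y be a finite nontrivial minimal obstacle between distinct points y1, y2 in R^d. Then the intersection conv({y1,y2}) ∩ conv(Y) is a singleton. -/
/-!
Parametrize the segment by `t ↦ lineMap y₁ y₂ t` and let `s` be the least parameter whose point
lies in `conv Y`; `s > 0` because `y₁ ∉ conv Y`. By minimality, every barycentric weight of that
point is positive, so it can be pushed slightly away from any other point of `conv Y` without
leaving `conv Y`. Pushing it away from a second intersection point further along the segment
moves it towards `y₁`, i.e. to a smaller parameter, contradicting the choice of `s`.
-/

variable {E : Type*} [AddCommGroup E] [Module ℝ E]

lemma Finset.pos_of_sum_smul_notMem_convexHull_erase [DecidableEq E] {Y : Finset E}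
    {w : E → ℝ} (hw₀ : ∀ y ∈ Y, 0 ≤ w y) (hw₁ : ∑ y ∈ Y, w y = 1)
    (hmin : ∀ y ∈ Y, ∑ y ∈ Y, w y • y ∉ convexHull ℝ (Y.erase y : Set E)) :
    ∀ y ∈ Y, 0 < w y := by
  intro y hy
  refine (hw₀ y hy).lt_of_ne fun hwy ↦ hmin y hy ?_
  rw [Finset.mem_convexHull']
  refine ⟨w, fun z hz ↦ hw₀ z (Finset.mem_of_mem_erase hz), ?_, ?_⟩
  · rwa [Finset.sum_erase _ hwy.symm]
  · exact Finset.sum_erase _ (by rw [← hwy, zero_smul])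

lemma Finset.exists_add_smul_sub_mem_convexHull [DecidableEq E] {Y : Finset E} {x z : E}
    (hx : x ∈ convexHull ℝ (Y : Set E)) (hmin : ∀ y ∈ Y, x ∉ convexHull ℝ (Y.erase y : Set E))
    (hz : z ∈ convexHull ℝ (Y : Set E)) :
    ∃ ε > (0 : ℝ), ∀ c ∈ Set.Icc 0 ε, x + c • (x - z) ∈ convexHull ℝ (Y : Set E) := by
  obtain ⟨w, hw₀, hw₁, rfl⟩ := Finset.mem_convexHull'.mp hx
  obtain ⟨v, hv₀, hv₁, rfl⟩ := Finset.mem_convexHull'.mp hz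
  have hw_pos := Finset.pos_of_sum_smul_notMem_convexHull_erase hw₀ hw₁ hmin
  have hY : Y.Nonempty := Finset.nonempty_of_sum_ne_zero (by rw [hw₁]; exact one_ne_zero)
  obtain ⟨y₀, hy₀, hy₀_min⟩ := Y.exists_min_image w hY
  -- the weights `(1 + c) w - c v` stay nonnegative as long as `c ≤ min w`, since `v ≤ 1`
  refine ⟨w y₀, hw_pos y₀ hy₀, fun c hc ↦ Finset.mem_convexHull'.mpr
    ⟨fun y ↦ (1 + c) * w y - c * v y, fun y hy ↦ ?_, ?_, ?_⟩⟩
  · have hvy : v y ≤ 1 := hv₁ ▸ Finset.single_le_sum hv₀ hy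
    nlinarith [hc.1, hc.2, hy₀_min y hy, hv₀ y hy, hw₀ y hy]
  · rw [Finset.sum_sub_distrib, ← Finset.mul_sum, ← Finset.mul_sum, hw₁, hv₁]
    ring
  · simp only [sub_smul, mul_smul, Finset.sum_sub_distrib, ← Finset.smul_sum]
    module

lemma Finset.exists_lt_lineMap_mem_convexHull [DecidableEq E] {y₁ y₂ : E} {Y : Finset E}
    {s t : ℝ} (hs : 0 < s) (hst : s < t)
    (hsY : AffineMap.lineMap y₁ y₂ s ∈ convexHull ℝ (Y : Set E))
    (hmin : ∀ y ∈ Y, AffineMap.lineMap y₁ y₂ s ∉ convexHull ℝ (Y.erase y : Set E))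
    (htY : AffineMap.lineMap y₁ y₂ t ∈ convexHull ℝ (Y : Set E)) :
    ∃ s' ∈ Set.Ico 0 s, AffineMap.lineMap y₁ y₂ s' ∈ convexHull ℝ (Y : Set E) := by
  obtain ⟨ε, hε, hpush⟩ := Finset.exists_add_smul_sub_mem_convexHull hsY hmin htY
  set c := min ε (s / (t - s))
  have hts : 0 < t - s := sub_pos.mpr hst
  have hc : 0 < c := lt_min hε (div_pos hs hts)
  have hc_le : c * (t - s) ≤ s := (le_div_iff₀ hts).mp (min_le_right _ _)
  refine ⟨s - c * (t - s), ⟨by linarith, by linarith [mul_pos hc hts]⟩, ?_⟩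
  convert hpush c ⟨hc.le, min_le_left _ _⟩ using 1
  simp only [AffineMap.lineMap_apply_module]
  module

theorem Finset.exists_segment_inter_convexHull_eq_singleton [TopologicalSpace E]
    [IsTopologicalAddGroup E] [ContinuousSMul ℝ E] [T2Space E] [DecidableEq E]
    {y₁ y₂ : E} {Y : Finset E} (hobs : (convexHull ℝ (Y : Set E) ∩ segment ℝ y₁ y₂).Nonempty)
    (h₁ : y₁ ∉ convexHull ℝ (Y : Set E))
    (hmin : ∀ y ∈ Y, ∀ x ∈ segment ℝ y₁ y₂, x ∉ convexHull ℝ (Y.erase y : Set E)) :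
    ∃ z, segment ℝ y₁ y₂ ∩ convexHull ℝ (Y : Set E) = {z} := by
  set f := AffineMap.lineMap (k := ℝ) y₁ y₂
  set T := Set.Icc (0 : ℝ) 1 ∩ f ⁻¹' convexHull ℝ (Y : Set E)
  have hseg : segment ℝ y₁ y₂ = f '' Set.Icc 0 1 := segment_eq_image_lineMap ℝ y₁ y₂
  have hT_closed : IsClosed T :=
    isClosed_Icc.inter ((Y.finite_toSet.isClosed_convexHull ℝ).preimage
      AffineMap.lineMap_continuous)
  have hT_ne : T.Nonempty := by
    obtain ⟨_, hxY, t, ht, rfl⟩ := hseg ▸ hobs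
    exact ⟨t, ht, hxY⟩
  have hT_bdd : BddBelow T := ⟨0, fun t ht ↦ ht.1.1⟩
  set s := sInf T
  have hsT : s ∈ T := hT_closed.csInf_mem hT_ne hT_bdd
  have hs_seg : f s ∈ segment ℝ y₁ y₂ := hseg ▸ Set.mem_image_of_mem f hsT.1
  have hs_pos : 0 < s := hsT.1.1.lt_of_ne fun h ↦ h₁ (by simpa [f, ← h] using hsT.2)
  have hT_eq : ∀ t ∈ T, t = s := by
    intro t ht
    refine ((csInf_le hT_bdd ht).eq_or_lt.resolve_right fun hst ↦ ?_).symm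
    obtain ⟨s', ⟨hs'₀, hs's⟩, hs'Y⟩ := Finset.exists_lt_lineMap_mem_convexHull hs_pos hst hsT.2
      (fun y hy ↦ hmin y hy _ hs_seg) ht.2
    have hs'T : s' ∈ T := ⟨⟨hs'₀, hs's.le.trans hsT.1.2⟩, hs'Y⟩
    exact (csInf_le hT_bdd hs'T).not_gt hs's
  refine ⟨f s, Set.eq_singleton_iff_unique_mem.mpr ⟨⟨hs_seg, hsT.2⟩, ?_⟩⟩
  rintro _ ⟨hx, hxY⟩
  obtain ⟨t, ht, rfl⟩ := hseg ▸ hx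
  rw [hT_eq t ⟨ht, hxY⟩]

theorem stmt_7_general (d : ℕ) (y1 y2 : Fin d → ℝ) (Y : Finset (Fin d → ℝ))
    (hobs : (convexHull ℝ (Y : Set (Fin d → ℝ)) ∩ convexHull ℝ ({y1, y2} : Set (Fin d → ℝ))).Nonempty)
    (h1 : y1 ∉ convexHull ℝ (Y : Set (Fin d → ℝ)))
    (hmin : ∀ y ∈ Y,
      convexHull ℝ ((Y.erase y : Finset (Fin d → ℝ)) : Set (Fin d → ℝ)) ∩
        convexHull ℝ ({y1, y2} : Set (Fin d → ℝ)) = ∅) :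
    ∃ z : Fin d → ℝ,
      convexHull ℝ ({y1, y2} : Set (Fin d → ℝ)) ∩ convexHull ℝ (Y : Set (Fin d → ℝ)) = {z} := by
  rw [convexHull_pair] at hobs hmin ⊢
  exact Finset.exists_segment_inter_convexHull_eq_singleton hobs h1
    fun y hy x hx hxY ↦ (hmin y hy).subset ⟨hxY, hx⟩

/-- For a nontrivial minimal obstacle, the intersection of the segment with
the convex hull of the obstacle is a singleton. -/
theorem stmt_7 (d : ℕ) (y1 y2 : Fin d → ℝ) (hne : y1 ≠ y2) (Y : Finset (Fin d → ℝ))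
    (hobs : (convexHull ℝ (Y : Set (Fin d → ℝ)) ∩ convexHull ℝ ({y1, y2} : Set (Fin d → ℝ))).Nonempty)
    (h1 : y1 ∉ convexHull ℝ (Y : Set (Fin d → ℝ)))
    (h2 : y2 ∉ convexHull ℝ (Y : Set (Fin d → ℝ)))
    (hmin : ∀ y ∈ Y,
      convexHull ℝ ((Y.erase y : Finset (Fin d → ℝ)) : Set (Fin d → ℝ)) ∩
        convexHull ℝ ({y1, y2} : Set (Fin d → ℝ)) = ∅) :
    ∃ z : Fin d → ℝ,
      convexHull ℝ ({y1, y2} : Set (Fin d → ℝ)) ∩ convexHull ℝ (Y : Set (Fin d → ℝ)) = {z} :=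
  stmt_7_general d y1 y2 Y hobs h1 hmin
end

section
/- Let Y be a finite nontrivial minimal obstacle between distinct points y1, y2 in R^d, and let y' be any point in R^d. Then there exists y ∈ Y such that conv({y1, y2, y'}) and conv(Y \ {y}) are disjoint. -/
/-!
Let `q` be a point of `conv Y ∩ [y₁, y₂]`. Minimality keeps `q` off every facet `conv (Y \ {y})`,
so `Y` is affinely independent (Carathéodory) and `q` has positive barycentric coordinates.
The direction `y₂ - y₁` is transversal to the affine span of `Y`: otherwise `y₁ ∉ conv Y` would lie
in that span, and walking from `q` to `y₁` one would leave `conv Y` through a facet at a point of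
`[y₁, y₂]`. Hence the plane of the triangle meets `aff Y` in at most a line through `q`.

Suppose every facet `conv (Y \ {y})` meets the triangle, at `p y`. Fix `a ∈ Y`; the barycentric
coordinates of `p a` and `q` both sum to one, so some `y₀` has coordinate in `p a` at least that in
`q`. As `p a` and `p y₀` lie on the `y'`-side of `[y₁, y₂]` on a common line through `q`,
`p y₀ = q + s • (p a - q)` with `s ≥ 0`, so its `y₀`-coordinate is positive: it is not in the
facet opposite `y₀`.
-/

open Finset

variable {𝕜 E : Type*} [Field 𝕜] [AddCommGroup E] [Module 𝕜 E]

theorem Finset.exists_weights_of_mem_affineSpan {Y : Finset E} {p : E}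
    (hp : p ∈ affineSpan 𝕜 (Y : Set E)) :
    ∃ w : E → 𝕜, ∑ y ∈ Y, w y = 1 ∧ ∑ y ∈ Y, w y • y = p := by
  classical
  rw [← Set.image_id (Y : Set E)] at hp
  obtain ⟨s, w, hsY, hw₁, rfl⟩ := eq_affineCombination_of_mem_affineSpan_image hp
  have hsY' : s ⊆ Y := by exact_mod_cast hsY
  refine ⟨Set.indicator s w, by rw [sum_indicator_subset _ hsY', hw₁], ?_⟩
  rw [affineCombination_eq_linear_combination _ _ _ hw₁, ← sum_indicator_subset _ hsY']
  refine sum_congr rfl fun y _ => ?_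
  by_cases h : y ∈ s <;> simp [h]

variable [LinearOrder 𝕜]

theorem sub_mem_vectorSpan_of_mem_convexHull {s : Set E} {x y : E} (hx : x ∈ convexHull 𝕜 s)
    (hy : y ∈ convexHull 𝕜 s) : x - y ∈ vectorSpan 𝕜 s :=
  vsub_mem_vectorSpan_of_mem_affineSpan_of_mem_affineSpan (convexHull_subset_affineSpan s hx)
    (convexHull_subset_affineSpan s hy)

variable [IsStrictOrderedRing 𝕜]

theorem exists_mem_Icc_forall_nonneg_and_eq_zero {ι : Type*} {s : Finset ι} {f g : ι → 𝕜}
    (hf : ∀ i ∈ s, 0 ≤ f i) (hg : ∃ i ∈ s, g i < 0) :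
    ∃ r ∈ Set.Icc (0 : 𝕜) 1, (∀ i ∈ s, 0 ≤ (1 - r) * f i + r * g i) ∧
      ∃ i ∈ s, (1 - r) * f i + r * g i = 0 := by
  classical
  have hfg : ∀ j ∈ s, g j < 0 → 0 < f j - g j := fun j hj hgj => by linarith [hf j hj]
  obtain ⟨i₀, hi₀⟩ : (s.filter fun i => g i < 0).Nonempty := by simpa [Finset.Nonempty] using hg
  obtain ⟨i, hi, hmin⟩ := (s.filter fun i => g i < 0).exists_min_image
    (fun i => f i / (f i - g i)) ⟨i₀, hi₀⟩
  rw [mem_filter] at hi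
  have hpos := hfg i hi.1 hi.2
  set r := f i / (f i - g i) with hr
  have hr₀ : 0 ≤ r := div_nonneg (hf i hi.1) hpos.le
  have hr₁ : r ≤ 1 := by rw [hr, div_le_one hpos]; linarith [hi.2]
  refine ⟨r, ⟨hr₀, hr₁⟩, fun j hj => ?_, i, hi.1, ?_⟩
  · rcases lt_or_ge (g j) 0 with hgj | hgj
    · have hrj : r * (f j - g j) ≤ f j := by
        rw [← le_div_iff₀ (hfg j hj hgj)]; exact hmin j (mem_filter.2 ⟨hj, hgj⟩)
      linarith
    · exact add_nonneg (mul_nonneg (by linarith) (hf j hj)) (mul_nonneg hr₀ hgj)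
  · rw [hr]; field_simp; ring

theorem Finset.sum_smul_mem_convexHull_erase [DecidableEq E] {Y : Finset E} {w : E → 𝕜} {y₀ : E}
    (hw₀ : ∀ y ∈ Y, 0 ≤ w y) (hw₁ : ∑ y ∈ Y, w y = 1) (hy₀ : w y₀ = 0) :
    ∑ y ∈ Y, w y • y ∈ convexHull 𝕜 (Y.erase y₀ : Set E) := by
  refine mem_convexHull'.2 ⟨w, fun y hy => hw₀ y (mem_of_mem_erase hy), ?_, ?_⟩
  · rwa [sum_erase _ hy₀]
  · rw [sum_erase _ (by rw [hy₀, zero_smul])]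

theorem AffineIndependent.weight_eq_zero_of_mem_convexHull_erase [DecidableEq E] {Y : Finset E}
    (hY : AffineIndependent 𝕜 ((↑) : Y → E)) {w : E → 𝕜} {y₀ : E} (hy₀ : y₀ ∈ Y)
    (hw₁ : ∑ y ∈ Y, w y = 1) (hx : ∑ y ∈ Y, w y • y ∈ convexHull 𝕜 (Y.erase y₀ : Set E)) :
    w y₀ = 0 := by
  obtain ⟨ν, -, hν₁, hν⟩ := mem_convexHull'.1 hx
  have key := hY.eq_of_sum_eq_sum_subtype (w₁ := w) (w₂ := fun y => if y ≠ y₀ then ν y else 0)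
    (by rw [← sum_filter, filter_ne', hν₁, hw₁])
    (by simp_rw [ite_smul, zero_smul]; rw [← sum_filter, filter_ne', hν]) y₀ hy₀
  simpa using key

theorem affineIndependent_of_forall_notMem_convexHull_erase [DecidableEq E] {Y : Finset E}
    {q : E} (hq : q ∈ convexHull 𝕜 (Y : Set E))
    (hqY : ∀ y ∈ Y, q ∉ convexHull 𝕜 (Y.erase y : Set E)) :
    AffineIndependent 𝕜 ((↑) : Y → E) := by
  by_contra h
  obtain ⟨⟨y, hy⟩, hqy⟩ := Caratheodory.mem_convexHull_erase h hq
  exact hqY y hy hqy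

theorem exists_mem_segment_mem_convexHull_erase [DecidableEq E] {Y : Finset E} {p q : E}
    (hq : q ∈ convexHull 𝕜 (Y : Set E)) (hp : p ∈ affineSpan 𝕜 (Y : Set E))
    (hpY : p ∉ convexHull 𝕜 (Y : Set E)) :
    ∃ x ∈ segment 𝕜 q p, ∃ y ∈ Y, x ∈ convexHull 𝕜 (Y.erase y : Set E) := by
  obtain ⟨α, hα₀, hα₁, rfl⟩ := mem_convexHull'.1 hq
  obtain ⟨β, hβ₁, rfl⟩ := exists_weights_of_mem_affineSpan hp
  have hβ : ∃ y ∈ Y, β y < 0 := by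
    by_contra! h
    exact hpY (mem_convexHull'.2 ⟨β, h, hβ₁, rfl⟩)
  obtain ⟨r, ⟨hr₀, hr₁⟩, hnonneg, y, hy, hzero⟩ := exists_mem_Icc_forall_nonneg_and_eq_zero hα₀ hβ
  refine ⟨∑ y ∈ Y, ((1 - r) * α y + r * β y) • y, ⟨1 - r, r, by linarith, hr₀, by ring, ?_⟩, y, hy,
    sum_smul_mem_convexHull_erase hnonneg ?_ hzero⟩
  · simp only [smul_sum, smul_smul, ← sum_add_distrib, add_smul]
  · rw [sum_add_distrib, ← mul_sum, ← mul_sum, hα₁, hβ₁]; ring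

theorem disjoint_vectorSpan_pair_of_disjoint_convexHull_erase [DecidableEq E] {Y : Finset E}
    {y₁ y₂ q : E} (hq : q ∈ convexHull 𝕜 (Y : Set E)) (hqs : q ∈ segment 𝕜 y₁ y₂)
    (hy₁ : y₁ ∉ convexHull 𝕜 (Y : Set E))
    (hmin : ∀ y ∈ Y, Disjoint (convexHull 𝕜 (Y.erase y : Set E)) (segment 𝕜 y₁ y₂)) :
    Disjoint (vectorSpan 𝕜 (Y : Set E)) (vectorSpan 𝕜 {y₁, y₂}) := by
  rw [vectorSpan_pair, Submodule.disjoint_span_singleton]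
  intro hu
  exfalso
  have hy₁q : y₁ - q ∈ vectorSpan 𝕜 (Y : Set E) := by
    have h := sub_mem_vectorSpan_of_mem_convexHull (subset_convexHull 𝕜 _ (Set.mem_insert y₁ {y₂}))
      (by rwa [convexHull_pair])
    rw [vectorSpan_pair] at h
    exact Submodule.span_singleton_le_iff_mem _ _ |>.2 hu h
  have hy₁Y : y₁ ∈ affineSpan 𝕜 (Y : Set E) := by
    simpa using vadd_mem_affineSpan_of_mem_affineSpan_of_mem_vectorSpan
      (convexHull_subset_affineSpan _ hq) hy₁q
  obtain ⟨x, hx, y, hy, hxy⟩ := exists_mem_segment_mem_convexHull_erase hq hy₁Y hy₁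
  exact Set.disjoint_left.1 (hmin y hy) hxy
    ((convex_segment y₁ y₂).segment_subset hqs (left_mem_segment 𝕜 y₁ y₂) hx)

theorem exists_sub_smul_mem_vectorSpan_pair_of_mem_convexHull_triple {x y₁ y₂ y' q : E}
    (hx : x ∈ convexHull 𝕜 {y₁, y₂, y'}) (hq : q ∈ segment 𝕜 y₁ y₂) :
    ∃ c : 𝕜, 0 ≤ c ∧ (c = 0 → x ∈ segment 𝕜 y₁ y₂) ∧
      x - q - c • (y' - q) ∈ vectorSpan 𝕜 {y₁, y₂} := by
  rw [Set.pair_comm y₂ y', Set.insert_comm, convexHull_insert (Set.insert_nonempty _ _),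
    convexHull_pair, mem_convexJoin] at hx
  obtain ⟨a, ha, z, hz, c, b, hc, hb, hcb, rfl⟩ := hx
  rw [Set.mem_singleton_iff] at ha
  subst a
  refine ⟨c, hc, fun h => ?_, ?_⟩
  · rwa [h, zero_smul, zero_add, (by linarith : b = 1), one_smul]
  · have h : c • y' + b • z - q - c • (y' - q) = b • (z - q) := by
      rw [eq_sub_of_add_eq hcb]; module
    rw [h]
    exact Submodule.smul_mem _ _ (sub_mem_vectorSpan_of_mem_convexHull
      (by rwa [convexHull_pair]) (by rwa [convexHull_pair]))

theorem exists_nonneg_smul_of_mem_convexHull_triple {V : Submodule 𝕜 E} {y₁ y₂ y' q p₁ p₂ : E}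
    (hV : Disjoint V (vectorSpan 𝕜 {y₁, y₂})) (hq : q ∈ segment 𝕜 y₁ y₂)
    (hp₁ : p₁ ∈ convexHull 𝕜 {y₁, y₂, y'}) (hp₂ : p₂ ∈ convexHull 𝕜 {y₁, y₂, y'})
    (hp₁s : p₁ ∉ segment 𝕜 y₁ y₂) (hp₁V : p₁ - q ∈ V) (hp₂V : p₂ - q ∈ V) :
    ∃ s : 𝕜, 0 ≤ s ∧ p₂ - q = s • (p₁ - q) := by
  obtain ⟨c₁, hc₁, hc₁s, hu₁⟩ := exists_sub_smul_mem_vectorSpan_pair_of_mem_convexHull_triple hp₁ hq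
  obtain ⟨c₂, hc₂, -, hu₂⟩ := exists_sub_smul_mem_vectorSpan_pair_of_mem_convexHull_triple hp₂ hq
  have hc₁pos : 0 < c₁ := hc₁.lt_of_ne fun h => hp₁s (hc₁s h.symm)
  have key : c₁ • (p₂ - q) - c₂ • (p₁ - q) = 0 := by
    refine Submodule.disjoint_def.1 hV _
      (V.sub_mem (V.smul_mem _ hp₂V) (V.smul_mem _ hp₁V)) ?_
    have h : c₁ • (p₂ - q) - c₂ • (p₁ - q) =
        c₁ • (p₂ - q - c₂ • (y' - q)) - c₂ • (p₁ - q - c₁ • (y' - q)) := by module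
    rw [h]
    exact Submodule.sub_mem _ (Submodule.smul_mem _ _ hu₂) (Submodule.smul_mem _ _ hu₁)
  refine ⟨c₂ / c₁, div_nonneg hc₂ hc₁pos.le, ?_⟩
  rw [sub_eq_zero] at key
  rw [div_eq_inv_mul, mul_smul, ← key, smul_smul, inv_mul_cancel₀ hc₁pos.ne', one_smul]

theorem exists_disjoint_convexHull_triple_convexHull_erase [DecidableEq E] {Y : Finset E}
    {y₁ y₂ y' q : E} (hq : q ∈ convexHull 𝕜 (Y : Set E)) (hqs : q ∈ segment 𝕜 y₁ y₂)
    (hmin : ∀ y ∈ Y, Disjoint (convexHull 𝕜 (Y.erase y : Set E)) (segment 𝕜 y₁ y₂))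
    (hV : Disjoint (vectorSpan 𝕜 (Y : Set E)) (vectorSpan 𝕜 {y₁, y₂})) :
    ∃ y ∈ Y, Disjoint (convexHull 𝕜 {y₁, y₂, y'}) (convexHull 𝕜 (Y.erase y : Set E)) := by
  have hqY : ∀ y ∈ Y, q ∉ convexHull 𝕜 (Y.erase y : Set E) := fun y hy hqy =>
    Set.disjoint_left.1 (hmin y hy) hqy hqs
  have hind := affineIndependent_of_forall_notMem_convexHull_erase hq hqY
  have hYsub : ∀ y, convexHull 𝕜 (Y.erase y : Set E) ⊆ convexHull 𝕜 (Y : Set E) := fun y =>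
    convexHull_mono (coe_subset.2 (erase_subset y Y))
  obtain ⟨α, hα₀, hα₁, hαq⟩ := mem_convexHull'.1 hq
  have hαpos : ∀ y ∈ Y, 0 < α y := fun y hy => (hα₀ y hy).lt_of_ne fun h =>
    hqY y hy (hαq ▸ sum_smul_mem_convexHull_erase hα₀ hα₁ h.symm)
  by_contra! hmeet
  have hp : ∀ y ∈ Y, ∃ p ∈ convexHull 𝕜 {y₁, y₂, y'}, p ∈ convexHull 𝕜 (Y.erase y : Set E) :=
    fun y hy => Set.not_disjoint_iff.1 (hmeet y hy)
  obtain ⟨a, ha⟩ := coe_nonempty.1 (convexHull_nonempty_iff.1 ⟨q, hq⟩)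
  obtain ⟨p₁, hp₁T, hp₁Y⟩ := hp a ha
  obtain ⟨μ, -, hμ₁, hμp⟩ := mem_convexHull'.1 (hYsub a hp₁Y)
  obtain ⟨y₀, hy₀, hαμ⟩ := exists_le_of_sum_le ⟨a, ha⟩ (hα₁.trans hμ₁.symm).le
  obtain ⟨p₂, hp₂T, hp₂Y⟩ := hp y₀ hy₀
  obtain ⟨s, hs, hp₂⟩ := exists_nonneg_smul_of_mem_convexHull_triple hV hqs hp₁T hp₂T
    (Set.disjoint_left.1 (hmin a ha) hp₁Y)
    (sub_mem_vectorSpan_of_mem_convexHull (hYsub a hp₁Y) hq)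
    (sub_mem_vectorSpan_of_mem_convexHull (hYsub y₀ hp₂Y) hq)
  have hw : ∑ y ∈ Y, (α y + s * (μ y - α y)) • y = p₂ := by
    rw [eq_add_of_sub_eq hp₂, ← hαq, ← hμp]
    simp only [add_smul, mul_smul, sub_smul, sum_add_distrib, sum_sub_distrib, ← smul_sum]
    abel
  have hw₁ : ∑ y ∈ Y, (α y + s * (μ y - α y)) = 1 := by
    rw [sum_add_distrib, ← mul_sum, sum_sub_distrib, hα₁, hμ₁]; ring
  have hzero := hind.weight_eq_zero_of_mem_convexHull_erase hy₀ hw₁ (hw ▸ hp₂Y)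
  nlinarith [hαpos y₀ hy₀, mul_nonneg hs (sub_nonneg.2 hαμ)]

theorem stmt_8_general (d : ℕ) (y1 y2 y' : Fin d → ℝ) (Y : Finset (Fin d → ℝ))
    (hobs : (convexHull ℝ (Y : Set (Fin d → ℝ)) ∩ convexHull ℝ ({y1, y2} : Set (Fin d → ℝ))).Nonempty)
    (h1 : y1 ∉ convexHull ℝ (Y : Set (Fin d → ℝ)))
    (hmin : ∀ y ∈ Y,
      convexHull ℝ ((Y.erase y : Finset (Fin d → ℝ)) : Set (Fin d → ℝ)) ∩
        convexHull ℝ ({y1, y2} : Set (Fin d → ℝ)) = ∅) :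
    ∃ y ∈ Y,
      convexHull ℝ ({y1, y2, y'} : Set (Fin d → ℝ)) ∩
        convexHull ℝ ((Y.erase y : Finset (Fin d → ℝ)) : Set (Fin d → ℝ)) = ∅ := by
  simp only [convexHull_pair, ← Set.disjoint_iff_inter_eq_empty] at hobs hmin ⊢
  obtain ⟨q, hq, hqs⟩ := hobs
  exact exists_disjoint_convexHull_triple_convexHull_erase hq hqs hmin
    (disjoint_vectorSpan_pair_of_disjoint_convexHull_erase hq hqs h1 hmin)

/-- Given a nontrivial minimal obstacle `Y` between `y1` and `y2` and any
point `y'`, some point of `Y` can be removed so that the triangle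
`conv {y1, y2, y'}` is disjoint from the hull of the rest. -/
theorem stmt_8 (d : ℕ) (y1 y2 y' : Fin d → ℝ) (hne : y1 ≠ y2) (Y : Finset (Fin d → ℝ))
    (hobs : (convexHull ℝ (Y : Set (Fin d → ℝ)) ∩ convexHull ℝ ({y1, y2} : Set (Fin d → ℝ))).Nonempty)
    (h1 : y1 ∉ convexHull ℝ (Y : Set (Fin d → ℝ)))
    (h2 : y2 ∉ convexHull ℝ (Y : Set (Fin d → ℝ)))
    (hmin : ∀ y ∈ Y,
      convexHull ℝ ((Y.erase y : Finset (Fin d → ℝ)) : Set (Fin d → ℝ)) ∩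
        convexHull ℝ ({y1, y2} : Set (Fin d → ℝ)) = ∅) :
    ∃ y ∈ Y,
      convexHull ℝ ({y1, y2, y'} : Set (Fin d → ℝ)) ∩
        convexHull ℝ ((Y.erase y : Finset (Fin d → ℝ)) : Set (Fin d → ℝ)) = ∅ :=
  stmt_8_general d y1 y2 y' Y hobs h1 hmin
end

section
/- Let Y be a finite nontrivial minimal obstacle between distinct points y1, y2 in R^d with y1, y2 ∉ aff(Y). Then there exist p ∈ R^d and q ∈ R with p·y1 > q, p·y2 < q, and p·x = q for all x ∈ aff(Y). -/
/-!
A point `z` of `conv Y ∩ [y1, y2]` lies in `aff Y`, and because neither endpoint lies in `conv Y`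
it lies strictly between `y1` and `y2`. Take a linear functional `g` that is constant, equal to
`q`, on `aff Y` and takes a larger value at `y1 ∉ aff Y`. Since `g z = q` is a strict convex
combination of `g y1 > q` and `g y2`, necessarily `g y2 < q`.
-/

open Module

theorem lt_of_mem_openSegment_of_lt {𝕜 : Type*} [Field 𝕜] [LinearOrder 𝕜] [IsStrictOrderedRing 𝕜]
    {a b q : 𝕜} (hq : q ∈ openSegment 𝕜 a b) (ha : q < a) : b < q := by
  obtain ⟨s, t, hs, ht, hst, rfl⟩ := hq
  simp only [smul_eq_mul] at ha ⊢
  have hba : t * b < t * a := by linear_combination ha - a * hst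
  have : s * b < s * a := mul_lt_mul_of_pos_left (lt_of_mul_lt_mul_left hba ht.le) hs
  linear_combination this - b * hst

namespace AffineSubspace

variable {𝕜 V : Type*} [Field 𝕜] [AddCommGroup V] [Module 𝕜 V]

theorem exists_dual_eq_add_one_of_notMem {P : AffineSubspace 𝕜 V} {a x : V} (ha : a ∈ P)
    (hx : x ∉ P) : ∃ (g : Dual 𝕜 V) (q : 𝕜), (∀ y ∈ P, g y = q) ∧ g x = q + 1 := by
  have hxa : x - a ∉ P.direction := fun h ↦ hx ((vsub_right_mem_direction_iff_mem ha x).mp h)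
  obtain ⟨f, hfx, hfP⟩ := P.direction.exists_dual_map_eq_bot_of_notMem hxa inferInstance
  have hf : ∀ y ∈ P, f y = f a := fun y hy ↦ by
    have : y - a ∈ LinearMap.ker f :=
      LinearMap.le_ker_iff_map.mpr hfP ((vsub_right_mem_direction_iff_mem ha y).mpr hy)
    rwa [LinearMap.mem_ker, map_sub, sub_eq_zero] at this
  refine ⟨(f (x - a))⁻¹ • f, (f (x - a))⁻¹ * f a, fun y hy ↦ by simp [hf y hy], ?_⟩
  have hfx' : f x = f a + f (x - a) := by rw [map_sub]; ring
  simp only [LinearMap.smul_apply, smul_eq_mul]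
  rw [hfx', mul_add, inv_mul_cancel₀ hfx, mul_comm]

variable [LinearOrder 𝕜] [IsStrictOrderedRing 𝕜]

theorem exists_dual_separating_of_mem_openSegment {P : AffineSubspace 𝕜 V} {x y z : V}
    (hzP : z ∈ P) (hz : z ∈ openSegment 𝕜 x y) (hx : x ∉ P) :
    ∃ (g : Dual 𝕜 V) (q : 𝕜), q < g x ∧ g y < q ∧ ∀ w ∈ P, g w = q := by
  obtain ⟨g, q, hgP, hgx⟩ := exists_dual_eq_add_one_of_notMem hzP hx
  have hgz : g z ∈ openSegment 𝕜 (g x) (g y) := by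
    rw [← g.coe_toAffineMap, ← image_openSegment]
    exact Set.mem_image_of_mem _ hz
  rw [hgP z hzP] at hgz
  exact ⟨g, q, by linarith, lt_of_mem_openSegment_of_lt hgz (by linarith), hgP⟩

end AffineSubspace

theorem mem_openSegment_of_mem_convexHull_inter_pair {𝕜 E : Type*} [Field 𝕜] [LinearOrder 𝕜]
    [IsStrictOrderedRing 𝕜] [AddCommGroup E] [Module 𝕜 E] {s : Set E} {x y z : E}
    (hz : z ∈ convexHull 𝕜 s ∩ convexHull 𝕜 {x, y}) (hx : x ∉ convexHull 𝕜 s)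
    (hy : y ∉ convexHull 𝕜 s) : z ∈ openSegment 𝕜 x y := by
  rw [convexHull_pair] at hz
  exact mem_openSegment_of_ne_left_right (fun h ↦ hx (h ▸ hz.1)) (fun h ↦ hy (h ▸ hz.1)) hz.2

theorem stmt_9_general (d : ℕ) (y1 y2 : Fin d → ℝ) (Y : Finset (Fin d → ℝ))
    (hobs : (convexHull ℝ (Y : Set (Fin d → ℝ)) ∩ convexHull ℝ ({y1, y2} : Set (Fin d → ℝ))).Nonempty)
    (h1 : y1 ∉ convexHull ℝ (Y : Set (Fin d → ℝ)))
    (h2 : y2 ∉ convexHull ℝ (Y : Set (Fin d → ℝ)))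
    (ha1 : y1 ∉ (affineSpan ℝ (Y : Set (Fin d → ℝ)) : Set (Fin d → ℝ))) :
    ∃ (p : Fin d → ℝ) (q : ℝ),
      (∑ i, p i * y1 i) > q ∧ (∑ i, p i * y2 i) < q ∧
      ∀ x ∈ (affineSpan ℝ (Y : Set (Fin d → ℝ)) : Set (Fin d → ℝ)), (∑ i, p i * x i) = q := by
  obtain ⟨z, hz⟩ := hobs
  obtain ⟨g, q, hgy1, hgy2, hgY⟩ := AffineSubspace.exists_dual_separating_of_mem_openSegment
    (convexHull_subset_affineSpan _ hz.1) (mem_openSegment_of_mem_convexHull_inter_pair hz h1 h2)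
    ha1
  have hg : ∀ x, ∑ i, (dotProductEquiv ℝ (Fin d)).symm g i * x i = g x := fun x ↦
    DFunLike.congr_fun ((dotProductEquiv ℝ (Fin d)).apply_symm_apply g) x
  exact ⟨_, q, by rwa [hg], by rwa [hg], fun x hx ↦ by rw [hg, hgY x hx]⟩

/-- If `Y` is a nontrivial minimal obstacle between `y1` and `y2`, neither of
which lies in the affine hull of `Y`, then there is a hyperplane containing
`aff Y` that strictly separates `y1` from `y2`. -/
theorem stmt_9 (d : ℕ) (y1 y2 : Fin d → ℝ) (hne : y1 ≠ y2) (Y : Finset (Fin d → ℝ))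
    (hobs : (convexHull ℝ (Y : Set (Fin d → ℝ)) ∩ convexHull ℝ ({y1, y2} : Set (Fin d → ℝ))).Nonempty)
    (h1 : y1 ∉ convexHull ℝ (Y : Set (Fin d → ℝ)))
    (h2 : y2 ∉ convexHull ℝ (Y : Set (Fin d → ℝ)))
    (hmin : ∀ y ∈ Y,
      convexHull ℝ ((Y.erase y : Finset (Fin d → ℝ)) : Set (Fin d → ℝ)) ∩
        convexHull ℝ ({y1, y2} : Set (Fin d → ℝ)) = ∅)
    (ha1 : y1 ∉ (affineSpan ℝ (Y : Set (Fin d → ℝ)) : Set (Fin d → ℝ)))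
    (ha2 : y2 ∉ (affineSpan ℝ (Y : Set (Fin d → ℝ)) : Set (Fin d → ℝ))) :
    ∃ (p : Fin d → ℝ) (q : ℝ),
      (∑ i, p i * y1 i) > q ∧ (∑ i, p i * y2 i) < q ∧
      ∀ x ∈ (affineSpan ℝ (Y : Set (Fin d → ℝ)) : Set (Fin d → ℝ)), (∑ i, p i * x i) = q :=
  stmt_9_general d y1 y2 Y hobs h1 h2 ha1
end

section
/- There exist finite sets X_B, X_R ⊆ R^4 with conv(X_B) ∩ conv(X_R) ≠ ∅ such that no pair x_j, x_j' of points of X_R admits an obstacle in X_B, i.e., conv(X_B) ∩ conv({x_j, x_j'}) = ∅ for all x_j, x_j' ∈ X_R. A witness is X_B = {(1,1,0,0), (-2,1,0,0), (1,-2,0,0)} and X_R = {(0,0,1,1), (0,0,-2,1), (0,0,1,-2)}, for which conv(X_B) ∩ conv(X_R) = {(0,0,0,0)}. -/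
/-!
The blue points span the plane `x₂ = x₃ = 0` and the red points the complementary plane
`x₀ = x₁ = 0`, so the two hulls can only meet at the origin; they do, since each triple sums to
zero. An edge of the red triangle avoids the origin, hence misses the blue hull.
-/

open Set

theorem apply_eq_zero_of_mem_convexHull {𝕜 ι : Type*} [Semiring 𝕜] [PartialOrder 𝕜]
    {s : Set (ι → 𝕜)} {i : ι} (h : ∀ y ∈ s, y i = 0) {x : ι → 𝕜} (hx : x ∈ convexHull 𝕜 s) :
    x i = 0 :=
  convexHull_min (t := LinearMap.ker (LinearMap.proj (R := 𝕜) (φ := fun _ ↦ 𝕜) i))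
    (fun y hy ↦ h y hy) (Submodule.convex _) hx

theorem zero_mem_convexHull_of_add_add_eq_zero {E : Type*} [AddCommGroup E] [Module ℝ E]
    {a b c : E} (h : a + b + c = 0) : (0 : E) ∈ convexHull ℝ {a, b, c} := by
  have hconv := convex_convexHull ℝ ({a, b, c} : Set E)
  have hmid : (1/2 : ℝ) • b + (1/2 : ℝ) • c ∈ convexHull ℝ {a, b, c} :=
    hconv (subset_convexHull ℝ _ (by simp)) (subset_convexHull ℝ _ (by simp))
      (by norm_num) (by norm_num) (by norm_num)
  have hcentroid : (0 : E) = (1/3 : ℝ) • a + (2/3 : ℝ) • ((1/2 : ℝ) • b + (1/2 : ℝ) • c) := by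
    linear_combination (norm := module) (-1/3 : ℝ) • h
  rw [hcentroid]
  exact hconv (subset_convexHull ℝ _ (by simp)) hmid (by norm_num) (by norm_num) (by norm_num)

def blue : Set (Fin 4 → ℝ) := {![1,1,0,0], ![-2,1,0,0], ![1,-2,0,0]}

def red : Set (Fin 4 → ℝ) := {![0,0,1,1], ![0,0,-2,1], ![0,0,1,-2]}

theorem zero_mem_convexHull_blue : (0 : Fin 4 → ℝ) ∈ convexHull ℝ blue :=
  zero_mem_convexHull_of_add_add_eq_zero (by ext i; fin_cases i <;> norm_num)

theorem zero_mem_convexHull_red : (0 : Fin 4 → ℝ) ∈ convexHull ℝ red :=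
  zero_mem_convexHull_of_add_add_eq_zero (by ext i; fin_cases i <;> norm_num)

theorem eq_zero_of_mem_convexHull_blue_of_mem_convexHull_red {x : Fin 4 → ℝ}
    (hB : x ∈ convexHull ℝ blue) (hR : x ∈ convexHull ℝ red) : x = 0 := by
  ext i
  fin_cases i
  · exact apply_eq_zero_of_mem_convexHull (by simp [red]) hR
  · exact apply_eq_zero_of_mem_convexHull (by simp [red]) hR
  · exact apply_eq_zero_of_mem_convexHull (by simp [blue]) hB
  · exact apply_eq_zero_of_mem_convexHull (by simp [blue]) hB

theorem zero_notMem_segment_red {y₁ y₂ : Fin 4 → ℝ} (hy₁ : y₁ ∈ red) (hy₂ : y₂ ∈ red) :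
    (0 : Fin 4 → ℝ) ∉ segment ℝ y₁ y₂ := by
  rintro ⟨a, b, ha, hb, hab, hsum⟩
  have h₂ := congrFun hsum 2
  have h₃ := congrFun hsum 3
  simp only [red, mem_insert_iff, mem_singleton_iff] at hy₁ hy₂
  rcases hy₁ with rfl | rfl | rfl <;> rcases hy₂ with rfl | rfl | rfl <;>
    simp only [Pi.add_apply, Pi.smul_apply, smul_eq_mul, Pi.zero_apply] at h₂ h₃ <;>
    norm_num [Matrix.cons_val_two, Matrix.cons_val_three] at h₂ h₃ <;> linarith

/-- There exist finite sets in ℝ⁴ whose convex hulls intersect although no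
pair of points of the second set admits an obstacle in the first set. -/
theorem stmt_10 :
    ∃ XB XR : Set (Fin 4 → ℝ),
      XB = {![1,1,0,0], ![-2,1,0,0], ![1,-2,0,0]} ∧
      XR = {![0,0,1,1], ![0,0,-2,1], ![0,0,1,-2]} ∧
      XB.Finite ∧ XR.Finite ∧
      convexHull ℝ XB ∩ convexHull ℝ XR = {![0,0,0,0]} ∧
      (convexHull ℝ XB ∩ convexHull ℝ XR).Nonempty ∧
      ∀ y1 ∈ XR, ∀ y2 ∈ XR,
        convexHull ℝ XB ∩ convexHull ℝ ({y1, y2} : Set (Fin 4 → ℝ)) = ∅ := by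
  have hinter : convexHull ℝ blue ∩ convexHull ℝ red = {0} :=
    eq_singleton_iff_unique_mem.mpr ⟨⟨zero_mem_convexHull_blue, zero_mem_convexHull_red⟩,
      fun _ hx ↦ eq_zero_of_mem_convexHull_blue_of_mem_convexHull_red hx.1 hx.2⟩
  refine ⟨blue, red, rfl, rfl, by simp [blue], by simp [red], ?_, ?_, ?_⟩
  · convert hinter using 2
    ext i; fin_cases i <;> rfl
  · simp [hinter]
  · intro y₁ hy₁ y₂ hy₂
    refine eq_empty_iff_forall_notMem.mpr fun x ⟨hxB, hxS⟩ ↦ ?_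
    have hxR : x ∈ convexHull ℝ red :=
      convexHull_mono (insert_subset hy₁ (singleton_subset_iff.mpr hy₂)) hxS
    rw [convexHull_pair, eq_zero_of_mem_convexHull_blue_of_mem_convexHull_red hxB hxR] at hxS
    exact zero_notMem_segment_red hy₁ hy₂ hxS
end

section
/- Let Y be a finite set in R^d and y1, y2 distinct points with y1, y2 ∉ aff(Y) and conv({y1,y2}) ∩ aff(Y) ≠ ∅. Then for any additional point x ∈ R^d, at least one of the following holds: y1 ∉ conv(Y ∪ {x}) or y2 ∉ conv(Y ∪ {x}). -/
/-!
Let `E` be the affine hull of `Y`. If `x ∈ E`, the whole hull `conv (Y ∪ {x})` lies in `E`.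
Otherwise every point of `conv (Y ∪ {x})` has the form `a • x + b • e` with `e ∈ E`, and it lies
outside `E` exactly when `a > 0`. A convex combination of two such points again has positive
`x`-coefficient, so the points of the join of `x` and `E` outside `E` form a convex set. If both
`y1` and `y2` were in `conv (Y ∪ {x})`, the whole segment `[y1, y2]` would avoid `E`.
-/

open Set

variable {𝕜 V : Type*} [Field 𝕜] [LinearOrder 𝕜] [IsStrictOrderedRing 𝕜]
  [AddCommGroup V] [Module 𝕜 V]

theorem AffineSubspace.mem_of_smul_add_smul_add_smul_mem {E : AffineSubspace 𝕜 V}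
    {x e₁ e₂ : V} {a b₁ b₂ : 𝕜} (he₁ : e₁ ∈ E) (he₂ : e₂ ∈ E) (ha : a ≠ 0)
    (hsum : a + b₁ + b₂ = 1) (hz : a • x + b₁ • e₁ + b₂ • e₂ ∈ E) : x ∈ E := by
  set z := a • x + b₁ • e₁ + b₂ • e₂
  have hxz : x - z = a⁻¹ • (b₁ • (z - e₁) + b₂ • (z - e₂)) := by
    obtain rfl : b₂ = 1 - a - b₁ := by linear_combination hsum
    rw [eq_inv_smul_iff₀ ha]
    module
  have hdir : x - z ∈ E.direction := by
    rw [hxz]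
    exact E.direction.smul_mem _ <| E.direction.add_mem
      (E.direction.smul_mem _ (E.vsub_mem_direction hz he₁))
      (E.direction.smul_mem _ (E.vsub_mem_direction hz he₂))
  simpa using E.vadd_mem_of_mem_direction hdir hz

theorem convex_convexJoin_singleton_diff {E : AffineSubspace 𝕜 V} {x : V} (hx : x ∉ E) :
    Convex 𝕜 (convexJoin 𝕜 {x} E \ E) := by
  have hxcoeff_pos : ∀ p ∈ convexJoin 𝕜 {x} E \ E,
      ∃ e ∈ E, ∃ a b : 𝕜, 0 < a ∧ a + b = 1 ∧ a • x + b • e = p := by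
    rintro p ⟨hpK, hpE⟩
    simp only [convexJoin_singleton_left, mem_iUnion] at hpK
    obtain ⟨e, he, a, b, ha, -, hab, rfl⟩ := hpK
    refine ⟨e, he, a, b, ha.lt_of_ne ?_, hab, rfl⟩
    rintro rfl
    exact hpE (by simpa [show b = 1 by linarith] using he)
  intro p hp q hq t s ht hs hts
  refine ⟨(convex_singleton x).convexJoin E.convex hp.1 hq.1 ht hs hts, fun hz => hx ?_⟩
  obtain ⟨e₁, he₁, a₁, b₁, ha₁, hab₁, rfl⟩ := hxcoeff_pos p hp
  obtain ⟨e₂, he₂, a₂, b₂, ha₂, hab₂, rfl⟩ := hxcoeff_pos q hq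
  have hμ : 0 < t * a₁ + s * a₂ := by
    rcases ht.eq_or_lt with rfl | ht
    · simpa [show s = 1 by linarith] using ha₂
    · exact add_pos_of_pos_of_nonneg (mul_pos ht ha₁) (mul_nonneg hs ha₂.le)
  refine E.mem_of_smul_add_smul_add_smul_mem he₁ he₂ hμ.ne' (b₁ := t * b₁) (b₂ := s * b₂)
    (by linear_combination t * hab₁ + s * hab₂ + hts)
    (by convert SetLike.mem_coe.1 hz using 1; module)

theorem convexHull_insert_subset_convexJoin {E : AffineSubspace 𝕜 V} {s : Set V} {x : V}
    (hs : s ⊆ E) (hE : (E : Set V).Nonempty) :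
    convexHull 𝕜 (insert x s) ⊆ convexJoin 𝕜 {x} E := by
  refine convexHull_min (insert_subset ?_ ?_) ((convex_singleton x).convexJoin E.convex)
  · obtain ⟨e, he⟩ := hE
    exact mem_convexJoin.2 ⟨x, rfl, e, he, left_mem_segment 𝕜 x e⟩
  · exact hs.trans (subset_convexJoin_right (singleton_nonempty x))

/-- Key step of the obstacle extension lemma: if the segment between `y1` and
`y2` meets the affine hull of `Y` while neither endpoint lies in it, then
after adding any point `x` at least one endpoint stays outside the hull. -/
theorem stmt_17 (d : ℕ) (Y : Finset (Fin d → ℝ)) (y1 y2 : Fin d → ℝ)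
    (ha1 : y1 ∉ (affineSpan ℝ (Y : Set (Fin d → ℝ)) : Set (Fin d → ℝ)))
    (ha2 : y2 ∉ (affineSpan ℝ (Y : Set (Fin d → ℝ)) : Set (Fin d → ℝ)))
    (hmeet : (convexHull ℝ ({y1, y2} : Set (Fin d → ℝ)) ∩
      (affineSpan ℝ (Y : Set (Fin d → ℝ)) : Set (Fin d → ℝ))).Nonempty) :
    ∀ x : Fin d → ℝ,
      y1 ∉ convexHull ℝ (insert x (Y : Set (Fin d → ℝ))) ∨
      y2 ∉ convexHull ℝ (insert x (Y : Set (Fin d → ℝ))) := by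
  intro x
  set E := affineSpan ℝ (Y : Set (Fin d → ℝ))
  obtain ⟨z, hz_seg, hzE⟩ := hmeet
  by_cases hx : x ∈ E
  · exact .inl fun h =>
      ha1 (convexHull_min (insert_subset hx (subset_affineSpan ℝ _)) E.convex h)
  by_contra! ⟨h1, h2⟩
  have hK := convexHull_insert_subset_convexJoin (x := x) (subset_affineSpan ℝ _) ⟨z, hzE⟩
  rw [convexHull_pair] at hz_seg
  have hseg := (convex_convexJoin_singleton_diff hx).segment_subset ⟨hK h1, ha1⟩ ⟨hK h2, ha2⟩
  exact (hseg hz_seg).2 hzE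
end

section
/- Let y1, y2, y' be points in R^d and H an affine hyperplane (or more generally an affine subspace A) such that conv({y1,y2}) ∩ A is a singleton, conv({y1,y'}) ∩ A is empty or a singleton, and conv({y2,y'}) ∩ A is empty or a singleton, with y' ∉ A implying at least one of conv({y1,y'}) ∩ A, conv({y2,y'}) ∩ A is empty. Then conv({y1,y2,y'}) ∩ A is a segment (possibly degenerate), i.e., the convex hull of at most two points of A. -/
/-!
Let `z` be the point where the side `[y1, y2]` meets `A`. The triangle is the union of the segments
from `z` to the points of the two sides through `y'`. If such a segment meets `A` in a point other
than `z`, its far endpoint lies on the line through two points of `A`, hence in `A`. So the section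
of the triangle is the union of the segments from `z` to the points of `A` on those two sides, and
the hypotheses leave at most one such point (`y'` itself when `y' ∈ A`).
-/

open Set

section Triangle

variable {𝕜 E : Type*} [Field 𝕜] [LinearOrder 𝕜] [IsStrictOrderedRing 𝕜]
  [AddCommGroup E] [Module 𝕜 E]

theorem segment_subset_union_segment {x y z : E} (hz : z ∈ segment 𝕜 x y) :
    segment 𝕜 x y ⊆ segment 𝕜 x z ∪ segment 𝕜 z y := by
  intro m hm
  rw [mem_segment_iff_wbtw] at hz hm
  rw [mem_union, mem_segment_iff_wbtw, mem_segment_iff_wbtw]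
  obtain ⟨s, ⟨hs0, -⟩, rfl⟩ := id hz
  obtain ⟨t, ⟨ht0, -⟩, rfl⟩ := id hm
  rcases wbtw_or_wbtw_smul_vadd_of_nonneg x (y -ᵥ x) hs0 ht0 with h | h
  · exact Or.inr (hm.trans_left_right h)
  · exact Or.inl h

theorem exists_mem_segment_of_mem_convexHull_triple {y₁ y₂ y z p : E}
    (hz : z ∈ segment 𝕜 y₁ y₂) (hp : p ∈ convexHull 𝕜 {y₁, y₂, y}) :
    ∃ q ∈ segment 𝕜 y₁ y ∪ segment 𝕜 y₂ y, p ∈ segment 𝕜 z q := by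
  have fan : ∀ {x m}, m ∈ segment 𝕜 z x → p ∈ segment 𝕜 m y →
      ∃ q ∈ segment 𝕜 x y, p ∈ segment 𝕜 z q := by
    intro x m hm hpm
    have hp' : p ∈ convexHull 𝕜 {z, x, y} :=
      (convex_convexHull 𝕜 _).segment_subset
        (segment_subset_convexHull (by simp) (by simp) hm) (subset_convexHull 𝕜 _ (by simp)) hpm
    rw [← convexJoin_singleton_segment, mem_convexJoin] at hp'
    obtain ⟨_, rfl, q, hq, hpq⟩ := hp'
    exact ⟨q, hq, hpq⟩
  rw [← convexJoin_segment_singleton, mem_convexJoin] at hp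
  obtain ⟨m, hm, _, rfl, hpm⟩ := hp
  rcases segment_subset_union_segment hz hm with hm | hm
  · obtain ⟨q, hq, hpq⟩ := fan (segment_symm 𝕜 y₁ z ▸ hm) hpm
    exact ⟨q, Or.inl hq, hpq⟩
  · obtain ⟨q, hq, hpq⟩ := fan hm hpm
    exact ⟨q, Or.inr hq, hpq⟩

theorem convexHull_triple_inter_eq_segment {A : AffineSubspace 𝕜 E} {y₁ y₂ y z : E}
    (hz : z ∈ segment 𝕜 y₁ y₂) (hzA : z ∈ A)
    (hsides : ((segment 𝕜 y₁ y ∪ segment 𝕜 y₂ y) ∩ A).Subsingleton) :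
    ∃ w ∈ A, convexHull 𝕜 {y₁, y₂, y} ∩ A = segment 𝕜 z w := by
  have hzT : z ∈ convexHull 𝕜 {y₁, y₂, y} :=
    segment_subset_convexHull (by simp) (by simp) hz
  have hsidesT : segment 𝕜 y₁ y ∪ segment 𝕜 y₂ y ⊆ convexHull 𝕜 {y₁, y₂, y} :=
    union_subset (segment_subset_convexHull (by simp) (by simp))
      (segment_subset_convexHull (by simp) (by simp))
  have hfan : ∀ p ∈ convexHull 𝕜 {y₁, y₂, y} ∩ A,
      p = z ∨ ∃ q ∈ (segment 𝕜 y₁ y ∪ segment 𝕜 y₂ y) ∩ A, p ∈ segment 𝕜 z q := by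
    rintro p ⟨hpT, hpA⟩
    obtain ⟨q, hq, hpq⟩ := exists_mem_segment_of_mem_convexHull_triple hz hpT
    rcases eq_or_ne z p with rfl | hne
    · exact Or.inl rfl
    · exact Or.inr ⟨q, ⟨hq, A.right_mem_of_wbtw (mem_segment_iff_wbtw.1 hpq) hzA hpA hne⟩, hpq⟩
  rcases ((segment 𝕜 y₁ y ∪ segment 𝕜 y₂ y) ∩ A).eq_empty_or_nonempty with hempty | ⟨w, hw⟩
  · refine ⟨z, hzA, ?_⟩
    rw [segment_same, eq_singleton_iff_unique_mem]
    refine ⟨⟨hzT, hzA⟩, fun p hp => ?_⟩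
    rcases hfan p hp with rfl | ⟨q, hq, -⟩
    · rfl
    · simp [hempty] at hq
  · refine ⟨w, hw.2, Subset.antisymm (fun p hp => ?_) ?_⟩
    · rcases hfan p hp with rfl | ⟨q, hq, hpq⟩
      · exact left_mem_segment 𝕜 p w
      · rwa [hsides hq hw] at hpq
    · exact subset_inter ((convex_convexHull 𝕜 _).segment_subset hzT (hsidesT hw.1))
        (A.convex.segment_subset hzA hw.2)

end Triangle

/-- Geometric core of Lemma 3: under singleton/empty intersection conditions
of the three segment sides with an affine subspace `A`, the triangle meets
`A` in a (possibly degenerate) segment. -/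
theorem stmt_18 (d : ℕ) (y1 y2 y' : Fin d → ℝ) (A : AffineSubspace ℝ (Fin d → ℝ))
    (h12 : ∃ z : Fin d → ℝ,
      convexHull ℝ ({y1, y2} : Set (Fin d → ℝ)) ∩ (A : Set (Fin d → ℝ)) = {z})
    (h1' : convexHull ℝ ({y1, y'} : Set (Fin d → ℝ)) ∩ (A : Set (Fin d → ℝ)) = ∅ ∨
      ∃ z : Fin d → ℝ,
        convexHull ℝ ({y1, y'} : Set (Fin d → ℝ)) ∩ (A : Set (Fin d → ℝ)) = {z})
    (h2' : convexHull ℝ ({y2, y'} : Set (Fin d → ℝ)) ∩ (A : Set (Fin d → ℝ)) = ∅ ∨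
      ∃ z : Fin d → ℝ,
        convexHull ℝ ({y2, y'} : Set (Fin d → ℝ)) ∩ (A : Set (Fin d → ℝ)) = {z})
    (hout : y' ∉ (A : Set (Fin d → ℝ)) →
      convexHull ℝ ({y1, y'} : Set (Fin d → ℝ)) ∩ (A : Set (Fin d → ℝ)) = ∅ ∨
      convexHull ℝ ({y2, y'} : Set (Fin d → ℝ)) ∩ (A : Set (Fin d → ℝ)) = ∅) :
    ∃ a b : Fin d → ℝ, a ∈ A ∧ b ∈ A ∧
      convexHull ℝ ({y1, y2, y'} : Set (Fin d → ℝ)) ∩ (A : Set (Fin d → ℝ)) =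
        convexHull ℝ ({a, b} : Set (Fin d → ℝ)) := by
  obtain ⟨z, hz⟩ := h12
  have hzA : z ∈ segment ℝ y1 y2 ∩ A := by rw [← convexHull_pair, hz]; rfl
  rw [← subsingleton_iff_eq_empty_or_singleton, convexHull_pair] at h1' h2'
  simp only [convexHull_pair] at hout
  have hsides : ((segment ℝ y1 y' ∪ segment ℝ y2 y') ∩ A).Subsingleton := by
    rw [union_inter_distrib_right]
    by_cases hy' : y' ∈ A
    · have hy'₁ : y' ∈ segment ℝ y1 y' ∩ A := ⟨right_mem_segment ℝ y1 y', hy'⟩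
      have hy'₂ : y' ∈ segment ℝ y2 y' ∩ A := ⟨right_mem_segment ℝ y2 y', hy'⟩
      have hall : ∀ a ∈ segment ℝ y1 y' ∩ A ∪ segment ℝ y2 y' ∩ A, a = y' := by
        rintro a (ha | ha)
        exacts [h1' ha hy'₁, h2' ha hy'₂]
      exact fun a ha b hb => (hall a ha).trans (hall b hb).symm
    · rcases hout hy' with h | h <;> simpa [h]
  obtain ⟨w, hwA, hw⟩ := convexHull_triple_inter_eq_segment hzA.1 hzA.2 hsides
  exact ⟨z, w, hzA.2, hwA, by rw [hw, convexHull_pair]⟩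
end

section
/- Let S be a finite set of affinely independent points in R^d and let y1, y2 ∈ conv(S) be two points with y2 ≠ y1. Then there exists x ∈ S such that y2 ∉ conv(S \ {x}); moreover, if additionally y1 ∉ conv(S \ {x'}) for every x' ∈ S, then conv({y1, y2}) ∩ conv(S \ {x}) = ∅ for some choice of x ∈ S. -/
/-- Barycentric coordinates with respect to an affinely independent finite set are unique. -/
lemma bary_unique {d : ℕ} {S : Finset (Fin d → ℝ)}
    (hind : AffineIndependent ℝ (fun x : S => (x : Fin d → ℝ)))
    (w w' : (Fin d → ℝ) → ℝ)
    (hw : ∑ y ∈ S, w y = 1) (hw' : ∑ y ∈ S, w' y = 1)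
    (heq : ∑ y ∈ S, w y • y = ∑ y ∈ S, w' y • y) :
    ∀ y ∈ S, w y = w' y := by
  have hsum : ∑ i ∈ S.attach, (w ∘ Subtype.val) i = 1 := by
    simp only [Function.comp_apply]
    rw [Finset.sum_attach S (fun y => w y)]; exact hw
  have hsum' : ∑ i ∈ S.attach, (w' ∘ Subtype.val) i = 1 := by
    simp only [Function.comp_apply]
    rw [Finset.sum_attach S (fun y => w' y)]; exact hw'
  have hcomb : S.attach.affineCombination ℝ (fun x : S => (x : Fin d → ℝ)) (w ∘ Subtype.val)
      = S.attach.affineCombination ℝ (fun x : S => (x : Fin d → ℝ)) (w' ∘ Subtype.val) := by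
    rw [affineCombination_eq_centerMass hsum, affineCombination_eq_centerMass hsum',
      Finset.centerMass_eq_of_sum_1 _ _ hsum, Finset.centerMass_eq_of_sum_1 _ _ hsum']
    simp only [Function.comp_apply]
    rw [Finset.sum_attach S (fun y => w y • y), Finset.sum_attach S (fun y => w' y • y)]
    exact heq
  have hcall := hind.indicator_eq_of_affineCombination_eq S.attach S.attach
    (w ∘ Subtype.val) (w' ∘ Subtype.val) hsum hsum' hcomb
  intro y hy
  have h1 := congrFun hcall (⟨y, hy⟩ : S)
  have hmem : (⟨y, hy⟩ : S) ∈ (S.attach : Set S) := by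
    simp [Finset.mem_coe]
  rwa [Set.indicator_of_mem hmem, Set.indicator_of_mem hmem] at h1

/-- A point whose barycentric coordinate at `x` is positive is not in the hull of `S \ {x}`. -/
lemma notMem_erase_hull {d : ℕ} {S : Finset (Fin d → ℝ)}
    (hind : AffineIndependent ℝ (fun x : S => (x : Fin d → ℝ)))
    {x : Fin d → ℝ} (hx : x ∈ S) {w : (Fin d → ℝ) → ℝ}
    (hpos : 0 < w x) (hsum : ∑ y ∈ S, w y = 1) :
    (∑ y ∈ S, w y • y) ∉ convexHull ℝ ((S.erase x : Finset (Fin d → ℝ)) : Set (Fin d → ℝ)) := by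
  intro hmem
  obtain ⟨u, hu0, hu1, hueq⟩ := Finset.mem_convexHull'.mp hmem
  set w' : (Fin d → ℝ) → ℝ := fun y => if y ∈ S.erase x then u y else 0 with hw'def
  have hsub := Finset.erase_subset x S
  have hw'sum : ∑ y ∈ S, w' y = 1 := by
    rw [← Finset.sum_subset hsub (fun y _ hy => if_neg hy)]
    rw [← hu1]
    exact Finset.sum_congr rfl fun y hy => if_pos hy
  have hw'eq : ∑ y ∈ S, w' y • y = ∑ y ∈ S, w y • y := by
    rw [← Finset.sum_subset hsub (fun y _ hy => by show (if y ∈ S.erase x then u y else 0) • y = 0; rw [if_neg hy, zero_smul])]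
    calc ∑ y ∈ S.erase x, w' y • y = ∑ y ∈ S.erase x, u y • y :=
          Finset.sum_congr rfl fun y hy => by show (if y ∈ S.erase x then u y else 0) • y = u y • y; rw [if_pos hy]
      _ = _ := hueq
  have := bary_unique hind w w' hsum hw'sum hw'eq.symm x hx
  rw [hw'def] at this
  simp only [Finset.mem_erase, ne_eq, not_true_eq_false, false_and, if_false] at this
  exact absurd this (ne_of_gt hpos)

/-- Final step of Lemma 3: for an affinely independent set `S` and points
`y1, y2 ∈ conv S` with `y2 ≠ y1`, some vertex can be removed so that `y2`
escapes the hull; and if `y1` escapes every such hull, some vertex can be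
removed so that the whole segment is disjoint from the remaining hull. -/
theorem stmt_19 (d : ℕ) (S : Finset (Fin d → ℝ))
    (hind : AffineIndependent ℝ (fun x : S => (x : Fin d → ℝ)))
    (y1 y2 : Fin d → ℝ)
    (hy1 : y1 ∈ convexHull ℝ (S : Set (Fin d → ℝ)))
    (hy2 : y2 ∈ convexHull ℝ (S : Set (Fin d → ℝ)))
    (hne : y2 ≠ y1) :
    (∃ x ∈ S, y2 ∉ convexHull ℝ ((S.erase x : Finset (Fin d → ℝ)) : Set (Fin d → ℝ))) ∧
    ((∀ x' ∈ S, y1 ∉ convexHull ℝ ((S.erase x' : Finset (Fin d → ℝ)) : Set (Fin d → ℝ))) →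
      ∃ x ∈ S,
        convexHull ℝ ({y1, y2} : Set (Fin d → ℝ)) ∩
          convexHull ℝ ((S.erase x : Finset (Fin d → ℝ)) : Set (Fin d → ℝ)) = ∅) := by
  obtain ⟨w2, hw20, hw21, hw2eq⟩ := Finset.mem_convexHull'.mp hy2
  obtain ⟨w1, hw10, hw11, hw1eq⟩ := Finset.mem_convexHull'.mp hy1
  -- there is a vertex with positive `w2`-weight
  obtain ⟨x, hxS, hxpos⟩ : ∃ x ∈ S, 0 < w2 x := by
    by_contra h
    push_neg at h
    have : ∑ y ∈ S, w2 y = 0 :=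
      Finset.sum_eq_zero fun y hy => le_antisymm (h y hy) (hw20 y hy)
    rw [hw21] at this; norm_num at this
  constructor
  · exact ⟨x, hxS, hw2eq ▸ notMem_erase_hull hind hxS hxpos hw21⟩
  · intro H
    -- all barycentric coordinates of y1 are positive
    have hw1pos : ∀ y ∈ S, 0 < w1 y := by
      intro y hy
      rcases lt_or_eq_of_le (hw10 y hy) with h | h
      · exact h
      · exfalso
        apply H y hy
        rw [Finset.mem_convexHull']
        refine ⟨w1, fun z hz => hw10 z (Finset.mem_of_mem_erase hz), ?_, ?_⟩
        · rw [Finset.sum_erase S (by rw [← h])]; exact hw11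
        · rw [Finset.sum_erase S (by rw [← h]; simp)]; exact hw1eq
    refine ⟨x, hxS, ?_⟩
    rw [Set.eq_empty_iff_forall_notMem]
    rintro z ⟨hzseg, hzhull⟩
    rw [convexHull_pair] at hzseg
    obtain ⟨a, b, ha, hb, hab, hz⟩ := hzseg
    -- z has barycentric coordinates a•w1 + b•w2
    set w : (Fin d → ℝ) → ℝ := fun y => a * w1 y + b * w2 y with hwdef
    have hwsum : ∑ y ∈ S, w y = 1 := by
      simp only [hwdef, Finset.sum_add_distrib, ← Finset.mul_sum, hw11, hw21, mul_one, hab]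
    have hweq : ∑ y ∈ S, w y • y = z := by
      simp only [hwdef, add_smul, mul_smul, Finset.sum_add_distrib, ← Finset.smul_sum,
        hw1eq, hw2eq]
      exact hz
    have hwpos : 0 < w x := by
      rcases lt_or_eq_of_le hb with hb' | hb'
      · have : 0 ≤ a * w1 x := mul_nonneg ha (hw10 x hxS)
        have : 0 < b * w2 x := mul_pos hb' hxpos
        simp only [hwdef]; positivity
      · have ha' : 0 < a := by rw [← hb'] at hab; linarith
        have h1 : 0 < a * w1 x := mul_pos ha' (hw1pos x hxS)
        have h2 : 0 ≤ b * w2 x := mul_nonneg hb (le_of_lt hxpos)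
        simp only [hwdef]; linarith
    exact notMem_erase_hull hind hxS hwpos hwsum (hweq ▸ hzhull)
end
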